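/- arXiv:2210.15367 — 2 statements merged into one kernel-verified Lean document; each statement's English description precedes it below -/
import Mathlib

section
/- With θ as above, the m-th Kulkarni–Nomizu power satisfies θ^m = m! · ν, where ν = ν_g ⊗ n_h is the composite volume element (product of the metric volume form on Λ^m V* and the metric volume m-vector on Λ^m ℝ^m), assuming θ is orientation-compatible. -/
open TensorProduct ExteriorAlgebra

noncomputable section

/-- Wedge product of a finite family of vectors, as an element of the exterior algebra. -/
def wedgeL {M : Type} [AddCommGroup M] [Module ℝ M] {n : ℕ} (v : Fin n → M) :
    ExteriorAlgebra ℝ M :=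
  (List.ofFn fun i => ι ℝ (v i)).prod

/-- The bigraded algebra `Λ V* ⊗ Λ ℝ^m` of vector-valued forms, with `U` playing the
role of `V*` and `Fin m → ℝ` the role of `W = ℝ^m`. -/
abbrev Omega (U : Type) [AddCommGroup U] [Module ℝ U] (m : ℕ) : Type :=
  ExteriorAlgebra ℝ U ⊗[ℝ] ExteriorAlgebra ℝ (Fin m → ℝ)

/-- The subspace of bidegree `(k, h)` elements: `Λ^k U ⊗ Λ^h ℝ^m`. -/
def bideg (U : Type) [AddCommGroup U] [Module ℝ U] (m k h : ℕ) :
    Submodule ℝ (Omega U m) :=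
  Submodule.map₂ (TensorProduct.mk ℝ _ _) (⋀[ℝ]^k U) (⋀[ℝ]^h (Fin m → ℝ))

/-- The solder element `θ = Σ_a θ^a ⊗ T_a`, where `T_a` is the standard basis of `ℝ^m`. -/
def solder {U : Type} [AddCommGroup U] [Module ℝ U] {m : ℕ} (u : Fin m → U) : Omega U m :=
  ∑ a, ι ℝ (u a) ⊗ₜ[ℝ] ι ℝ (Pi.single a 1)

/-- The composite volume element `ν = ν_g ⊗ n_h` (wedge of the dual orthonormal basis
tensor the wedge of the standard basis). -/
def vol {U : Type} [AddCommGroup U] [Module ℝ U] {m : ℕ} (u : Fin m → U) : Omega U m :=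
  wedgeL u ⊗ₜ[ℝ] wedgeL (fun a : Fin m => Pi.single a (1 : ℝ))

/-!
The summands `θ^a ⊗ T_a` of `θ` have bidegree `(1, 1)`: they square to zero, and they commute
pairwise because the two anticommutation signs, one in each exterior factor, cancel. For such
elements `(x_1 + ⋯ + x_m)^m` keeps only the products of `m` distinct factors, and since these all
equal `x_1 ⋯ x_m`, it is `m! • x_1 ⋯ x_m`, here `m! • ν`.
-/

section SquareZero

variable {A : Type*} [Semiring A]

theorem Commute.add_pow_succ_of_mul_self_eq_zero {x y : A} (hxy : Commute x y) (hx : x * x = 0)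
    (n : ℕ) : (x + y) ^ (n + 1) = y ^ (n + 1) + (n + 1) • (x * y ^ n) := by
  induction n with
  | zero => simp [add_comm]
  | succ n ih =>
    have hxyx : x * y ^ n * x = 0 := by
      rw [mul_assoc, ((hxy.pow_right n).symm).eq, ← mul_assoc, hx, zero_mul]
    rw [pow_succ, ih, add_mul, mul_add, mul_add, smul_mul_assoc, smul_mul_assoc, hxyx, smul_zero,
      zero_add, ← (hxy.pow_right (n + 1)).eq, ← pow_succ, mul_assoc, ← pow_succ, succ_nsmul _ (n + 1)]
    abel

/-- The second identity is what makes the induction go through. -/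
theorem List.sum_pow_length_of_mul_self_eq_zero (l : List A) (hc : l.Pairwise Commute)
    (h0 : ∀ a ∈ l, a * a = 0) :
    l.sum ^ l.length = l.length.factorial • l.prod ∧ l.sum ^ (l.length + 1) = 0 := by
  induction l with
  | nil => simp
  | cons x xs ih =>
    obtain ⟨hx, hxs⟩ := List.pairwise_cons.mp hc
    have hxx : x * x = 0 := h0 x List.mem_cons_self
    have hxS : Commute x xs.sum := Commute.list_sum_right _ _ hx
    obtain ⟨hpow, hzero⟩ := ih hxs fun a ha => h0 a (List.mem_cons_of_mem _ ha)
    simp only [List.sum_cons, List.prod_cons, List.length_cons]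
    constructor
    · rw [hxS.add_pow_succ_of_mul_self_eq_zero hxx, hzero, hpow, mul_smul_comm, smul_smul,
        zero_add, Nat.factorial_succ]
    · rw [hxS.add_pow_succ_of_mul_self_eq_zero hxx, pow_succ, hzero, zero_mul, mul_zero,
        smul_zero, add_zero]

theorem Fin.sum_pow_eq_factorial_smul_prod_ofFn {n : ℕ} (f : Fin n → A)
    (hc : ∀ i j, Commute (f i) (f j)) (h0 : ∀ i, f i * f i = 0) :
    (∑ i, f i) ^ n = n.factorial • (List.ofFn f).prod := by
  have h := (List.sum_pow_length_of_mul_self_eq_zero (List.ofFn f)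
    (List.pairwise_ofFn.mpr fun i j _ => hc i j) (List.forall_mem_ofFn_iff.mpr h0)).1
  rwa [List.length_ofFn, List.sum_ofFn] at h

end SquareZero

theorem Algebra.TensorProduct.list_prod_ofFn_tmul {R A B : Type*} [CommSemiring R]
    [Semiring A] [Semiring B] [Algebra R A] [Algebra R B] {n : ℕ} (x : Fin n → A) (y : Fin n → B) :
    (List.ofFn fun i => x i ⊗ₜ[R] y i).prod = (List.ofFn x).prod ⊗ₜ[R] (List.ofFn y).prod := by
  induction n with
  | zero => simp [Algebra.TensorProduct.one_def]
  | succ n ih =>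
    simp only [List.ofFn_succ, List.prod_cons, ih, Algebra.TensorProduct.tmul_mul_tmul]

namespace ExteriorAlgebra

variable {R M N : Type*} [CommRing R] [AddCommGroup M] [Module R M] [AddCommGroup N] [Module R N]

theorem ι_tmul_ι_commute (x x' : M) (y y' : N) :
    Commute (ι R x ⊗ₜ[R] ι R y) (ι R x' ⊗ₜ[R] ι R y') := by
  have hM : ι R x' * ι R x = -(ι R x * ι R x') :=
    eq_neg_of_add_eq_zero_left (ι_add_mul_swap x' x)
  have hN : ι R y' * ι R y = -(ι R y * ι R y') :=
    eq_neg_of_add_eq_zero_left (ι_add_mul_swap y' y)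
  simp only [Commute, SemiconjBy, Algebra.TensorProduct.tmul_mul_tmul, hM, hN, neg_tmul, tmul_neg,
    neg_neg]

theorem ι_tmul_ι_mul_self (x : M) (y : N) :
    (ι R x ⊗ₜ[R] ι R y) * (ι R x ⊗ₜ[R] ι R y) = 0 := by
  rw [Algebra.TensorProduct.tmul_mul_tmul, ι_sq_zero, zero_tmul]

end ExteriorAlgebra

theorem solder_pow {U : Type} [AddCommGroup U] [Module ℝ U] {m : ℕ} (u : Fin m → U) :
    solder u ^ m = (m.factorial : ℝ) • vol u := by
  rw [solder, Fin.sum_pow_eq_factorial_smul_prod_ofFn _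
      (fun _ _ => ι_tmul_ι_commute _ _ _ _) (fun _ => ι_tmul_ι_mul_self _ _),
    Algebra.TensorProduct.list_prod_ofFn_tmul, Nat.cast_smul_eq_nsmul]
  rfl

theorem stmt_6_general (m : ℕ)
    (U : Type) [AddCommGroup U] [Module ℝ U]
    (u : Module.Basis (Fin m) ℝ U) :
    (solder (fun a => u a)) ^ m = (Nat.factorial m : ℝ) • vol (fun a => u a) :=
  solder_pow u

/-- The `m`-th Kulkarni–Nomizu power of the solder form is `m!` times the composite
volume element: `θ^m = m! · ν` with `ν = ν_g ⊗ n_h`. -/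
theorem stmt_6 (m r s : ℕ) (hm : r + s = m)
    (U : Type) [AddCommGroup U] [Module ℝ U]
    (η : (Fin m → ℝ) →ₗ[ℝ] (Fin m → ℝ) →ₗ[ℝ] ℝ)
    (hη : ∀ v w, η v w = ∑ a : Fin _, (if (a : ℕ) < s then (-1 : ℝ) else 1) * v a * w a)
    (g : U →ₗ[ℝ] U →ₗ[ℝ] ℝ) (u : Module.Basis (Fin m) ℝ U)
    (hg : ∀ a b, g (u a) (u b) = if a = b then (if (a : ℕ) < s then (-1 : ℝ) else 1) else 0)
    :
    (solder (fun a => u a)) ^ m = (Nat.factorial m : ℝ) • vol (fun a => u a) :=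
  stmt_6_general m U u
end
end

section
/- Trace lemma: for every Φ ∈ Λ^k V* ⊗ Λ^h W, tr(θ ⩕ Φ) = θ ⩕ tr(Φ) + (m − k − h) Φ, where tr is contraction with θ^♯ ∈ V ⊗ W*. -/
open TensorProduct ExteriorAlgebra

noncomputable section

/-- The trace operator: contraction with `θ^♯`, i.e. `tr Φ = Σ_a (ι_{(u a)^♯} ⊗ ι_{(T a)^♭}) Φ`. -/
def trOp {U : Type} [AddCommGroup U] [Module ℝ U] {m : ℕ} (u : Fin m → U)
    (cU : U → Module.End ℝ (ExteriorAlgebra ℝ U))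
    (cW : (Fin m → ℝ) → Module.End ℝ (ExteriorAlgebra ℝ (Fin m → ℝ))) :
    Module.End ℝ (Omega U m) :=
  ∑ a, TensorProduct.map (cU (u a)) (cW (Pi.single a 1))

/-! Write `θ = Σ_b e_b ⊗ T_b` and let `x ⊗ y` have bidegree `(k, h)`. Each contraction is an
antiderivation, `ι_{e_a}(e_b ∧ x) = g_ab x − e_b ∧ ι_{e_a} x`, and likewise on `W`; the two
minus signs cancel in the (ungraded) tensor product. Expanding
`Σ_{a,b} ι_{e_a}(e_b ∧ x) ⊗ ι_{T_a}(T_b ∧ y)`, the products of the second terms reassemble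
`θ ⩕ tr(x ⊗ y)`, the diagonal `g_aa η_aa = 1` gives `m (x ⊗ y)`, and the mixed terms are the
Euler operators `Σ_a g_aa e_a ∧ ι_{e_a}`, which act on `Λ^k` and `Λ^h` as multiplication by `k`
and `h`. -/

section Contraction

variable {M : Type} [AddCommGroup M] [Module ℝ M]

theorem wedgeL_cons {n : ℕ} (b : M) (v : Fin n → M) :
    wedgeL (Fin.cons b v : Fin (n + 1) → M) = ι ℝ b * wedgeL v := by
  simp [wedgeL, List.ofFn_succ]

theorem ι_mul_prod_eraseIdx_ofFn {n : ℕ} (v : Fin n → M) (i : Fin n) :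
    ι ℝ (v i) * ((List.ofFn fun j => ι ℝ (v j)).eraseIdx i).prod
      = (-1 : ℝ) ^ (i : ℕ) • wedgeL v := by
  induction n with
  | zero => exact i.elim0
  | succ n ih =>
    have hv : wedgeL v = ι ℝ (v 0) * wedgeL (fun j => v j.succ) := by
      simp [wedgeL, List.ofFn_succ]
    cases i using Fin.cases with
    | zero => simp [List.ofFn_succ, wedgeL]
    | succ i =>
      have hswap : ι ℝ (v i.succ) * ι ℝ (v 0) = -(ι ℝ (v 0) * ι ℝ (v i.succ)) :=
        eq_neg_of_add_eq_zero_left (ι_add_mul_swap _ _)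
      rw [List.ofFn_succ, Fin.val_succ, List.eraseIdx_cons_succ, List.prod_cons, ← mul_assoc,
        hswap, neg_mul, mul_assoc, ih (fun j => v j.succ) i, hv, pow_succ, mul_neg_one,
        neg_smul, mul_smul_comm]

variable (B : M →ₗ[ℝ] M →ₗ[ℝ] ℝ)

/-- `c x` is the interior product with the `B`-dual of `x`, given by the Leibniz expansion on
wedges of vectors. -/
def IsContraction (c : M → Module.End ℝ (ExteriorAlgebra ℝ M)) : Prop :=
  ∀ (x : M) (n : ℕ) (v : Fin n → M), c x (wedgeL v) = ∑ i : Fin n,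
    ((-1 : ℝ) ^ (i : ℕ) * B x (v i)) • ((List.ofFn fun j => ι ℝ (v j)).eraseIdx (i : ℕ)).prod

variable {B} {c : M → Module.End ℝ (ExteriorAlgebra ℝ M)}

theorem IsContraction.apply_ι_mul_wedgeL (hc : IsContraction B c) (x b : M) {n : ℕ}
    (v : Fin n → M) :
    c x (ι ℝ b * wedgeL v) = B x b • wedgeL v - ι ℝ b * c x (wedgeL v) := by
  rw [← wedgeL_cons, hc, hc, Fin.sum_univ_succ, Finset.mul_sum, sub_eq_add_neg,
    ← Finset.sum_neg_distrib]
  simp [List.ofFn_succ, wedgeL, pow_succ]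

theorem IsContraction.apply_ι_mul (hc : IsContraction B c) (x b : M)
    (z : ExteriorAlgebra ℝ M) :
    c x (ι ℝ b * z) = B x b • z - ι ℝ b * c x z := by
  have : c x ∘ₗ LinearMap.mulLeft ℝ (ι ℝ b) =
      B x b • LinearMap.id - LinearMap.mulLeft ℝ (ι ℝ b) ∘ₗ c x :=
    LinearMap.ext_on_range (ιMulti_span ℝ M) fun ⟨n, v⟩ => by
      simpa [ιMulti_apply, wedgeL] using hc.apply_ι_mul_wedgeL x b v
  simpa using LinearMap.congr_fun this z

/-- Euler's identity; `hdual` says that `a ↦ ε a • e a` is the `B`-dual basis of `e`. -/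
theorem IsContraction.sum_smul_ι_mul_apply (hc : IsContraction B c) {ι' : Type} [Fintype ι']
    (e : Module.Basis ι' ℝ M) (ε : ι' → ℝ) (hdual : ∀ a w, ε a * B (e a) w = e.repr w a)
    {n : ℕ} {z : ExteriorAlgebra ℝ M} (hz : z ∈ ⋀[ℝ]^n M) :
    ∑ a, ε a • (ι ℝ (e a) * c (e a) z) = (n : ℝ) • z := by
  have hwedge (v : Fin n → M) :
      ∑ a, ε a • (ι ℝ (e a) * c (e a) (wedgeL v)) = (n : ℝ) • wedgeL v := by
    have hv (i : Fin n) : ∑ a, (ε a * B (e a) (v i)) • ι ℝ (e a) = ι ℝ (v i) := by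
      simp only [hdual, ← map_smul, ← map_sum, e.sum_repr]
    calc ∑ a, ε a • (ι ℝ (e a) * c (e a) (wedgeL v))
        = ∑ i : Fin n, (-1 : ℝ) ^ (i : ℕ) • ((∑ a, (ε a * B (e a) (v i)) • ι ℝ (e a)) *
            ((List.ofFn fun j => ι ℝ (v j)).eraseIdx i).prod) := by
          simp only [hc _ n v, Finset.mul_sum, Finset.sum_mul, Finset.smul_sum, mul_smul_comm,
            smul_mul_assoc, smul_smul]
          rw [Finset.sum_comm]
          refine Finset.sum_congr rfl fun i _ => Finset.sum_congr rfl fun a _ => ?_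
          ring_nf
      _ = ∑ i : Fin n, wedgeL v := by
          simp [hv, ι_mul_prod_eraseIdx_ofFn, smul_smul, ← mul_pow]
      _ = (n : ℝ) • wedgeL v := by
          rw [Finset.sum_const, Finset.card_univ, Fintype.card_fin, Nat.cast_smul_eq_nsmul]
  rw [← ιMulti_span_fixedDegree] at hz
  have := LinearMap.eqOn_span' (R := ℝ)
    (f := ∑ a, ε a • (LinearMap.mulLeft ℝ (ι ℝ (e a)) ∘ₗ c (e a)))
    (g := (n : ℝ) • LinearMap.id) (s := Set.range (ιMulti ℝ n))
    (by rintro _ ⟨v, rfl⟩; simpa [ιMulti_apply, wedgeL] using hwedge v) hz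
  simpa using this

end Contraction

theorem LinearMap.apply_basis_eq_mul_repr {M : Type} [AddCommGroup M] [Module ℝ M]
    {ι' : Type} [DecidableEq ι'] (B : M →ₗ[ℝ] M →ₗ[ℝ] ℝ) (e : Module.Basis ι' ℝ M)
    (ε : ι' → ℝ) (he : ∀ a b, B (e a) (e b) = if a = b then ε a else 0) (a : ι') (w : M) :
    B (e a) w = ε a * e.repr w a := by
  have : B (e a) = ε a • e.coord a :=
    e.ext fun b => by simp [he, Finsupp.single_apply, eq_comm]
  simp [this]

theorem sum_sum_ite_smul_sub_tmul {A C : Type} [AddCommGroup A] [Module ℝ A] [AddCommGroup C]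
    [Module ℝ C] {ι' : Type} [Fintype ι'] [DecidableEq ι'] (ε : ι' → ℝ) (x : A) (y : C)
    (P : ι' → ι' → A) (Q : ι' → ι' → C) :
    ∑ a, ∑ b, ((if a = b then ε a else 0) • x - P a b) ⊗ₜ[ℝ]
        ((if a = b then ε a else 0) • y - Q a b) =
      ∑ a, ((ε a * ε a) • x ⊗ₜ[ℝ] y - x ⊗ₜ[ℝ] (ε a • Q a a) - (ε a • P a a) ⊗ₜ[ℝ] y) +
        ∑ a, ∑ b, P a b ⊗ₜ[ℝ] Q a b := by
  have hterm (a b : ι') : ((if a = b then ε a else 0) • x - P a b) ⊗ₜ[ℝ]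
      ((if a = b then ε a else 0) • y - Q a b) = P a b ⊗ₜ[ℝ] Q a b +
        if a = b then (ε a * ε a) • x ⊗ₜ[ℝ] y - x ⊗ₜ[ℝ] (ε a • Q a a) - (ε a • P a a) ⊗ₜ[ℝ] y
        else 0 := by
    split_ifs with hab
    · subst hab
      simp only [sub_tmul, tmul_sub, ← smul_tmul', tmul_smul]
      module
    · simp [neg_tmul, tmul_neg]
  simp only [hterm, Finset.sum_add_distrib, Finset.sum_ite_eq, Finset.mem_univ, if_true]
  rw [add_comm]

section Trace

variable {U : Type} [AddCommGroup U] [Module ℝ U] {m : ℕ} {u : Module.Basis (Fin m) ℝ U}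
  {ε : Fin m → ℝ} {g : U →ₗ[ℝ] U →ₗ[ℝ] ℝ} {η : (Fin m → ℝ) →ₗ[ℝ] (Fin m → ℝ) →ₗ[ℝ] ℝ}
  {cU : U → Module.End ℝ (ExteriorAlgebra ℝ U)}
  {cW : (Fin m → ℝ) → Module.End ℝ (ExteriorAlgebra ℝ (Fin m → ℝ))}

theorem trOp_solder_mul_tmul (hε : ∀ a, ε a * ε a = 1)
    (hg : ∀ a b, g (u a) (u b) = if a = b then ε a else 0)
    (hη : ∀ a b, η (Pi.single a 1) (Pi.single b 1) = if a = b then ε a else 0)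
    (hcU : IsContraction g cU) (hcW : IsContraction η cW) {k h : ℕ}
    {x : ExteriorAlgebra ℝ U} (hx : x ∈ ⋀[ℝ]^k U)
    {y : ExteriorAlgebra ℝ (Fin m → ℝ)} (hy : y ∈ ⋀[ℝ]^h (Fin m → ℝ)) :
    trOp u cU cW (solder u * x ⊗ₜ[ℝ] y) =
      solder u * trOp u cU cW (x ⊗ₜ[ℝ] y) + ((m : ℝ) - k - h) • x ⊗ₜ[ℝ] y := by
  have eulerU : ∑ a, ε a • (ι ℝ (u a) * cU (u a) x) = (k : ℝ) • x :=
    hcU.sum_smul_ι_mul_apply u ε (fun a w => by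
      rw [g.apply_basis_eq_mul_repr u ε hg, ← mul_assoc, hε, one_mul]) hx
  have eulerW : ∑ a, ε a • (ι ℝ (Pi.single a 1) * cW (Pi.single a 1) y) = (h : ℝ) • y := by
    have hη' (a b : Fin m) : η (Pi.basisFun ℝ (Fin m) a) (Pi.basisFun ℝ (Fin m) b) =
        if a = b then ε a else 0 := by simpa using hη a b
    simpa using hcW.sum_smul_ι_mul_apply (Pi.basisFun ℝ (Fin m)) ε (fun a w => by
      rw [η.apply_basis_eq_mul_repr _ ε hη', ← mul_assoc, hε, one_mul]) hy
  have lhs : trOp u cU cW (solder u * x ⊗ₜ[ℝ] y) = ∑ a, ∑ b,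
      ((if a = b then ε a else 0) • x - ι ℝ (u b) * cU (u a) x) ⊗ₜ[ℝ]
        ((if a = b then ε a else 0) • y - ι ℝ (Pi.single b 1) * cW (Pi.single a 1) y) := by
    simp only [trOp, solder, Finset.sum_mul, Algebra.TensorProduct.tmul_mul_tmul,
      LinearMap.sum_apply, map_sum, map_tmul, hcU.apply_ι_mul, hcW.apply_ι_mul, hg, hη]
    exact Finset.sum_comm
  have rhs : solder u * trOp u cU cW (x ⊗ₜ[ℝ] y) = ∑ a, ∑ b,
      (ι ℝ (u b) * cU (u a) x) ⊗ₜ[ℝ] (ι ℝ (Pi.single b 1) * cW (Pi.single a 1) y) := by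
    simp only [trOp, solder, LinearMap.sum_apply, map_tmul, Finset.mul_sum, Finset.sum_mul,
      Algebra.TensorProduct.tmul_mul_tmul]
  rw [lhs, rhs, sum_sum_ite_smul_sub_tmul, Finset.sum_sub_distrib, Finset.sum_sub_distrib,
    ← tmul_sum, ← sum_tmul, eulerU, eulerW]
  simp only [hε, one_smul, Finset.sum_const, Finset.card_univ, Fintype.card_fin]
  rw [tmul_smul, ← smul_tmul', ← Nat.cast_smul_eq_nsmul ℝ]
  module

theorem trOp_solder_mul_of_mem_bideg (hε : ∀ a, ε a * ε a = 1)
    (hg : ∀ a b, g (u a) (u b) = if a = b then ε a else 0)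
    (hη : ∀ a b, η (Pi.single a 1) (Pi.single b 1) = if a = b then ε a else 0)
    (hcU : IsContraction g cU) (hcW : IsContraction η cW) {k h : ℕ} {Φ : Omega U m}
    (hΦ : Φ ∈ bideg U m k h) :
    trOp u cU cW (solder u * Φ) = solder u * trOp u cU cW Φ + ((m : ℝ) - k - h) • Φ := by
  let L : Module.End ℝ (Omega U m) := trOp u cU cW ∘ₗ LinearMap.mulLeft ℝ (solder u) -
    LinearMap.mulLeft ℝ (solder u) ∘ₗ trOp u cU cW - ((m : ℝ) - k - h) • LinearMap.id
  have hL : bideg U m k h ≤ LinearMap.ker L :=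
    Submodule.map₂_le.mpr fun x hx y hy => by
      simp [L, trOp_solder_mul_tmul hε hg hη hcU hcW hx hy]
  have := hL hΦ
  rw [LinearMap.mem_ker] at this
  simpa [L, sub_sub, sub_eq_zero] using this

end Trace

theorem stmt_13_general (m s k h : ℕ)
    (U : Type) [AddCommGroup U] [Module ℝ U]
    (η : (Fin m → ℝ) →ₗ[ℝ] (Fin m → ℝ) →ₗ[ℝ] ℝ)
    (hη : ∀ v w, η v w = ∑ a : Fin _, (if (a : ℕ) < s then (-1 : ℝ) else 1) * v a * w a)
    (g : U →ₗ[ℝ] U →ₗ[ℝ] ℝ) (u : Module.Basis (Fin m) ℝ U)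
    (hg : ∀ a b, g (u a) (u b) = if a = b then (if (a : ℕ) < s then (-1 : ℝ) else 1) else 0)
    (cU : U → Module.End ℝ (ExteriorAlgebra ℝ U))
    (hcU : ∀ (x : U) (n : ℕ) (v : Fin n → U),
      cU x (wedgeL v) = ∑ i : Fin n, ((-1 : ℝ) ^ (i : ℕ) * g x (v i)) •
        ((List.ofFn fun j => ι ℝ (v j)).eraseIdx (i : ℕ)).prod)
    (cW : (Fin m → ℝ) → Module.End ℝ (ExteriorAlgebra ℝ (Fin m → ℝ)))
    (hcW : ∀ (y : Fin m → ℝ) (n : ℕ) (v : Fin n → (Fin m → ℝ)),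
      cW y (wedgeL v) = ∑ i : Fin n, ((-1 : ℝ) ^ (i : ℕ) * η y (v i)) •
        ((List.ofFn fun j => ι ℝ (v j)).eraseIdx (i : ℕ)).prod)
    (Φ : Omega U m) (hΦ : Φ ∈ bideg U m k h) :
    trOp (fun a => u a) cU cW (solder (fun a => u a) * Φ) =
      solder (fun a => u a) * trOp (fun a => u a) cU cW Φ +
        ((m : ℝ) - (k : ℝ) - (h : ℝ)) • Φ := by
  have hε (a : Fin m) : (if (a : ℕ) < s then (-1 : ℝ) else 1) *
      (if (a : ℕ) < s then (-1 : ℝ) else 1) = 1 := by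
    split_ifs <;> norm_num
  have hηT (a b : Fin m) : η (Pi.single a 1) (Pi.single b 1) =
      if a = b then (if (a : ℕ) < s then (-1 : ℝ) else 1) else 0 := by
    rcases eq_or_ne a b with rfl | hab
    · simp [hη, Pi.single_apply]
    · simp [hη, Pi.single_apply, hab, hab.symm]
  exact trOp_solder_mul_of_mem_bideg hε hg hηT hcU hcW hΦ

/-- Trace lemma: `tr(θ ⩕ Φ) = θ ⩕ tr(Φ) + (m − k − h) Φ` for `Φ` of bidegree `(k,h)`. -/
theorem stmt_13 (m r s k h : ℕ) (hm : r + s = m)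
    (U : Type) [AddCommGroup U] [Module ℝ U]
    (η : (Fin m → ℝ) →ₗ[ℝ] (Fin m → ℝ) →ₗ[ℝ] ℝ)
    (hη : ∀ v w, η v w = ∑ a : Fin _, (if (a : ℕ) < s then (-1 : ℝ) else 1) * v a * w a)
    (g : U →ₗ[ℝ] U →ₗ[ℝ] ℝ) (u : Module.Basis (Fin m) ℝ U)
    (hg : ∀ a b, g (u a) (u b) = if a = b then (if (a : ℕ) < s then (-1 : ℝ) else 1) else 0)
    (cU : U → Module.End ℝ (ExteriorAlgebra ℝ U))
    (hcU : ∀ (x : U) (n : ℕ) (v : Fin n → U),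
      cU x (wedgeL v) = ∑ i : Fin n, ((-1 : ℝ) ^ (i : ℕ) * g x (v i)) •
        ((List.ofFn fun j => ι ℝ (v j)).eraseIdx (i : ℕ)).prod)
    (cW : (Fin m → ℝ) → Module.End ℝ (ExteriorAlgebra ℝ (Fin m → ℝ)))
    (hcW : ∀ (y : Fin m → ℝ) (n : ℕ) (v : Fin n → (Fin m → ℝ)),
      cW y (wedgeL v) = ∑ i : Fin n, ((-1 : ℝ) ^ (i : ℕ) * η y (v i)) •
        ((List.ofFn fun j => ι ℝ (v j)).eraseIdx (i : ℕ)).prod)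
    (Φ : Omega U m) (hΦ : Φ ∈ bideg U m k h) :
    trOp (fun a => u a) cU cW (solder (fun a => u a) * Φ) =
      solder (fun a => u a) * trOp (fun a => u a) cU cW Φ +
        ((m : ℝ) - (k : ℝ) - (h : ℝ)) • Φ :=
  stmt_13_general m s k h U η hη g u hg cU hcU cW hcW Φ hΦ
end
end
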